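/- arXiv:2302.01324 — 5 statements merged into one kernel-verified Lean document; each statement's English description precedes it below -/
import Mathlib

section
/- Let α be a type with decidable equality and let g : Finset α → ℝ satisfy the diminishing returns property. Let X, Y, O be finite subsets of α with X ⊆ Y, and let u ∈ Y with u ∉ X. Let rad ≥ 0 and set a = g(X ∪ {u}) − g(X) and b = g(Y \ {u}) − g(Y). Let ā, b̄ be real numbers with |ā − a| ≤ 2·rad and |b̄ − b| ≤ 2·rad, and suppose ā ≥ 0 and b̄ ≤ 0. Then g((O ∪ X) ∩ Y) − g((O ∪ X ∪ {u}) ∩ Y) ≤ (1/2)·(g(X ∪ {u}) − g(X)) + 5·rad. -/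
/-- A set function `g` on finite subsets of `α` satisfies the diminishing
returns property if for all `A ⊆ B` and `x ∉ B`,
`g (A ∪ {x}) - g A ≥ g (B ∪ {x}) - g B`. -/
def DiminishingReturns {α : Type*} [DecidableEq α] (g : Finset α → ℝ) : Prop :=
  ∀ A B : Finset α, A ⊆ B → ∀ x : α, x ∉ B →
    g (A ∪ {x}) - g A ≥ g (B ∪ {x}) - g B

theorem lemma2_case1 {α : Type*} [DecidableEq α] (g : Finset α → ℝ)
    (hg : DiminishingReturns g)
    (X Y O : Finset α) (hXY : X ⊆ Y) (u : α) (huY : u ∈ Y) (huX : u ∉ X)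
    (rad : ℝ) (hrad : 0 ≤ rad)
    (a b : ℝ) (ha_def : a = g (X ∪ {u}) - g X) (hb_def : b = g (Y \ {u}) - g Y)
    (abar bbar : ℝ) (ha : |abar - a| ≤ 2 * rad) (hb : |bbar - b| ≤ 2 * rad)
    (habar : abar ≥ 0) (hbbar : bbar ≤ 0) :
    g ((O ∪ X) ∩ Y) - g ((O ∪ X ∪ {u}) ∩ Y) ≤
      (1 / 2) * (g (X ∪ {u}) - g X) + 5 * rad := by
  have haLB : -2 * rad ≤ a := by
    have := abs_le.mp ha
    linarith
  have hbUB : b ≤ 2 * rad := by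
    have := abs_le.mp hb
    linarith
  by_cases huO : u ∈ O
  · have hset : (O ∪ X ∪ {u}) ∩ Y = (O ∪ X) ∩ Y := by
      ext x
      simp only [Finset.mem_inter, Finset.mem_union, Finset.mem_singleton]
      constructor
      · rintro ⟨h1 | h2, hy⟩
        · exact ⟨h1, hy⟩
        · exact ⟨Or.inl (h2 ▸ huO), hy⟩
      · rintro ⟨h1, hy⟩; exact ⟨Or.inl h1, hy⟩
    rw [hset]
    rw [← ha_def]
    linarith
  · set S := (O ∪ X) ∩ Y with hS
    have huS : u ∉ S := by
      simp only [hS, Finset.mem_inter, Finset.mem_union]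
      rintro ⟨h1 | h2, _⟩
      · exact huO h1
      · exact huX h2
    have hset : (O ∪ X ∪ {u}) ∩ Y = S ∪ {u} := by
      ext x
      simp only [hS, Finset.mem_inter, Finset.mem_union, Finset.mem_singleton]
      constructor
      · rintro ⟨(h | h) | h, hy⟩
        · exact Or.inl ⟨Or.inl h, hy⟩
        · exact Or.inl ⟨Or.inr h, hy⟩
        · exact Or.inr h
      · rintro (⟨h1, hy⟩ | h)
        · exact ⟨Or.inl h1, hy⟩
        · exact ⟨Or.inr h, h ▸ huY⟩
    rw [hset]
    have hSsub : S ⊆ Y \ {u} := by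
      intro x hx
      simp only [Finset.mem_sdiff, Finset.mem_singleton]
      refine ⟨(Finset.inter_subset_right) hx, ?_⟩
      rintro rfl; exact huS hx
    have huYd : u ∉ Y \ {u} := by simp
    have hdr := hg S (Y \ {u}) hSsub u huYd
    have hYeq : (Y \ {u}) ∪ {u} = Y := by
      ext x
      simp only [Finset.mem_union, Finset.mem_sdiff, Finset.mem_singleton]
      constructor
      · rintro (⟨h, _⟩ | rfl)
        · exact h
        · exact huY
      · intro h
        by_cases hx : x = u
        · exact Or.inr hx
        · exact Or.inl ⟨h, hx⟩
    rw [hYeq] at hdr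
    rw [← ha_def]
    have : g S - g (S ∪ {u}) ≤ b := by rw [hb_def]; linarith
    linarith
end

section
/- Let α be a type with decidable equality and let g : Finset α → ℝ satisfy the diminishing returns property. Let X, Y, O be finite subsets of α with X ⊆ Y, and let u ∈ Y with u ∉ X. Let rad ≥ 0 and set a = g(X ∪ {u}) − g(X) and b = g(Y \ {u}) − g(Y). Let ā, b̄ be real numbers with |ā − a| ≤ 2·rad and |b̄ − b| ≤ 2·rad, and suppose ā < 0 and b̄ ≥ 0. Then g((O ∪ X) ∩ Y) − g((O ∪ X) ∩ (Y \ {u})) ≤ (1/2)·(g(Y \ {u}) − g(Y)) + 5·rad. -/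
theorem lemma2_case2 {α : Type*} [DecidableEq α] (g : Finset α → ℝ)
    (hg : DiminishingReturns g)
    (X Y O : Finset α) (hXY : X ⊆ Y) (u : α) (huY : u ∈ Y) (huX : u ∉ X)
    (rad : ℝ) (hrad : 0 ≤ rad)
    (a b : ℝ) (ha_def : a = g (X ∪ {u}) - g X) (hb_def : b = g (Y \ {u}) - g Y)
    (abar bbar : ℝ) (ha : |abar - a| ≤ 2 * rad) (hb : |bbar - b| ≤ 2 * rad)
    (habar : abar < 0) (hbbar : bbar ≥ 0) :
    g ((O ∪ X) ∩ Y) - g ((O ∪ X) ∩ (Y \ {u})) ≤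
      (1 / 2) * (g (Y \ {u}) - g Y) + 5 * rad := by
  have hab := abs_le.mp ha
  have hbb := abs_le.mp hb
  have hbge : g (Y \ {u}) - g Y ≥ -(2 * rad) := by
    have : b ≥ bbar - 2 * rad := by linarith
    linarith [hb_def ▸ this]
  by_cases hu : u ∈ O ∪ X
  · have hA : (O ∪ X) ∩ (Y \ {u}) ∪ {u} = (O ∪ X) ∩ Y := by
      ext x
      simp only [Finset.mem_union, Finset.mem_inter, Finset.mem_sdiff,
        Finset.mem_singleton]
      constructor
      · rintro (⟨h1, h2, _⟩ | rfl)
        · exact ⟨h1, h2⟩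
        · exact ⟨Finset.mem_union.mp hu, huY⟩
      · rintro ⟨h1, h2⟩
        by_cases hx : x = u
        · exact Or.inr hx
        · exact Or.inl ⟨h1, h2, hx⟩
    have hsub : X ⊆ (O ∪ X) ∩ (Y \ {u}) := by
      intro x hx
      simp only [Finset.mem_inter, Finset.mem_union, Finset.mem_sdiff,
        Finset.mem_singleton]
      exact ⟨Or.inr hx, hXY hx, fun h => huX (h ▸ hx)⟩
    have hnu : u ∉ (O ∪ X) ∩ (Y \ {u}) := by
      simp [Finset.mem_inter]
    have hdr := hg X ((O ∪ X) ∩ (Y \ {u})) hsub u hnu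
    rw [hA] at hdr
    have : g ((O ∪ X) ∩ Y) - g ((O ∪ X) ∩ (Y \ {u})) ≤ a := by
      rw [ha_def]; linarith
    linarith
  · have : (O ∪ X) ∩ Y = (O ∪ X) ∩ (Y \ {u}) := by
      ext x
      simp only [Finset.mem_inter, Finset.mem_sdiff, Finset.mem_singleton]
      constructor
      · rintro ⟨h1, h2⟩
        exact ⟨h1, h2, fun h => hu (h ▸ h1)⟩
      · rintro ⟨h1, h2, _⟩
        exact ⟨h1, h2⟩
    rw [this]
    linarith
end

section
/- Let α be a type with decidable equality and let g : Finset α → ℝ satisfy the diminishing returns property. Let X, Y, O be finite subsets of α with X ⊆ Y, and let u ∈ Y with u ∉ X. Let rad ≥ 0 and set a = g(X ∪ {u}) − g(X) and b = g(Y \ {u}) − g(Y). Let ā, b̄ be real numbers with |ā − a| ≤ 2·rad and |b̄ − b| ≤ 2·rad, and suppose ā < 0 and b̄ < 0. Then g((O ∪ X) ∩ Y) − g((O ∪ X ∪ {u}) ∩ Y) ≤ (1/2)·(g(X ∪ {u}) − g(X)) + 5·rad. -/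
theorem lemma2_case3 {α : Type*} [DecidableEq α] (g : Finset α → ℝ)
    (hg : DiminishingReturns g)
    (X Y O : Finset α) (hXY : X ⊆ Y) (u : α) (huY : u ∈ Y) (huX : u ∉ X)
    (rad : ℝ) (hrad : 0 ≤ rad)
    (a b : ℝ) (ha_def : a = g (X ∪ {u}) - g X) (hb_def : b = g (Y \ {u}) - g Y)
    (abar bbar : ℝ) (ha : |abar - a| ≤ 2 * rad) (hb : |bbar - b| ≤ 2 * rad)
    (habar : abar < 0) (hbbar : bbar < 0) :
    g ((O ∪ X) ∩ Y) - g ((O ∪ X ∪ {u}) ∩ Y) ≤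
      (1 / 2) * (g (X ∪ {u}) - g X) + 5 * rad := by
  have hYu : (Y \ {u}) ∪ {u} = Y :=
    Finset.sdiff_union_of_subset (Finset.singleton_subset_iff.mpr huY)
  have hXsub : X ⊆ Y \ {u} := by
    intro x hx
    simp only [Finset.mem_sdiff, Finset.mem_singleton]
    exact ⟨hXY hx, fun h => huX (h ▸ hx)⟩
  have hab : a + b ≥ 0 := by
    have := hg X (Y \ {u}) hXsub u (by simp)
    rw [hYu] at this
    rw [ha_def, hb_def]; linarith
  rw [abs_le] at ha hb
  by_cases huO : u ∈ O
  · have heq : O ∪ X ∪ {u} = O ∪ X := by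
      ext x; simp only [Finset.mem_union, Finset.mem_singleton]
      constructor
      · rintro ((h | h) | rfl) <;> tauto
      · tauto
    rw [heq]
    linarith [hb.1]
  · set S := (O ∪ X) ∩ Y with hS
    have huS : u ∉ S := by
      simp only [hS, Finset.mem_inter, Finset.mem_union]
      tauto
    have hSsub : S ⊆ Y \ {u} := by
      intro x hx
      simp only [Finset.mem_sdiff, Finset.mem_singleton]
      exact ⟨(Finset.mem_inter.mp hx).2, fun h => huS (h ▸ hx)⟩
    have h2 := hg S (Y \ {u}) hSsub u (by simp)
    rw [hYu] at h2
    have hSeq : (O ∪ X ∪ {u}) ∩ Y = S ∪ {u} := by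
      ext x
      simp only [hS, Finset.mem_inter, Finset.mem_union, Finset.mem_singleton]
      constructor
      · rintro ⟨(h | rfl), hy⟩ <;> tauto
      · rintro (⟨h, hy⟩ | rfl)
        · tauto
        · exact ⟨Or.inr rfl, huY⟩
    rw [hSeq]
    linarith [hb.1]
end

section
/- Let α be a type with decidable equality and let g : Finset α → ℝ satisfy the diminishing returns property. Let X, Y, O be finite subsets of α with X ⊆ Y, and let u ∈ Y with u ∉ X. Let rad ≥ 0 and set a = g(X ∪ {u}) − g(X) and b = g(Y \ {u}) − g(Y). Let ā, b̄ be real numbers with |ā − a| ≤ 2·rad and |b̄ − b| ≤ 2·rad, and suppose ā ≥ 0 and b̄ > 0. Let p = ā/(ā + b̄). Then p·(g((O ∪ X) ∩ Y) − g((O ∪ X ∪ {u}) ∩ Y)) + (1 − p)·(g((O ∪ X) ∩ Y) − g((O ∪ X) ∩ (Y \ {u}))) ≤ (1/2)·(p·a + (1 − p)·b) + 5·rad. -/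
lemma key_alg (a b abar bbar rad p : ℝ) (hrad : 0 ≤ rad)
    (ha : |abar - a| ≤ 2 * rad) (hb : |bbar - b| ≤ 2 * rad)
    (habar : abar ≥ 0) (hbbar : bbar > 0) (hp : p = abar / (abar + bbar)) :
    (1 - p) * a ≤ (1/2) * (p * a + (1 - p) * b) + 3 * rad ∧
    p * b ≤ (1/2) * (p * a + (1 - p) * b) + 3 * rad := by
  have hs : (0:ℝ) < abar + bbar := by linarith
  have hp0 : 0 ≤ p := by rw [hp]; positivity
  have hp1 : p ≤ 1 := by rw [hp, div_le_one hs]; linarith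
  have h1 : p * (abar + bbar) = abar := by rw [hp]; field_simp
  have ha' := abs_le.mp ha
  have hb' := abs_le.mp hb
  have hmid : p * bbar ≤ (1/2) * (p * abar + (1 - p) * bbar) := by
    nlinarith [h1, sq_nonneg (abar - bbar), hs, hbbar, habar]
  have hmid' : (1 - p) * abar = p * bbar := by nlinarith [h1]
  constructor
  · nlinarith [mul_nonneg hp0 hrad, mul_nonneg (by linarith : (0:ℝ) ≤ 1 - p) hrad,
      mul_nonneg hp0 (by linarith : 0 ≤ abar + 2*rad - a),
      mul_nonneg (by linarith : (0:ℝ) ≤ 1 - p) (by linarith : 0 ≤ abar + 2*rad - a),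
      mul_nonneg hp0 (by linarith : 0 ≤ a + 2*rad - abar),
      mul_nonneg (by linarith : (0:ℝ) ≤ 1 - p) (by linarith : 0 ≤ bbar + 2*rad - b),
      mul_nonneg (by linarith : (0:ℝ) ≤ 1 - p) (by linarith : 0 ≤ b + 2*rad - bbar)]
  · nlinarith [mul_nonneg hp0 hrad, mul_nonneg (by linarith : (0:ℝ) ≤ 1 - p) hrad,
      mul_nonneg hp0 (by linarith : 0 ≤ bbar + 2*rad - b),
      mul_nonneg hp0 (by linarith : 0 ≤ a + 2*rad - abar),
      mul_nonneg hp0 (by linarith : 0 ≤ abar + 2*rad - a),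
      mul_nonneg (by linarith : (0:ℝ) ≤ 1 - p) (by linarith : 0 ≤ bbar + 2*rad - b),
      mul_nonneg (by linarith : (0:ℝ) ≤ 1 - p) (by linarith : 0 ≤ b + 2*rad - bbar)]

theorem lemma2_case4 {α : Type*} [DecidableEq α] (g : Finset α → ℝ)
    (hg : DiminishingReturns g)
    (X Y O : Finset α) (hXY : X ⊆ Y) (u : α) (huY : u ∈ Y) (huX : u ∉ X)
    (rad : ℝ) (hrad : 0 ≤ rad)
    (a b : ℝ) (ha_def : a = g (X ∪ {u}) - g X) (hb_def : b = g (Y \ {u}) - g Y)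
    (abar bbar : ℝ) (ha : |abar - a| ≤ 2 * rad) (hb : |bbar - b| ≤ 2 * rad)
    (habar : abar ≥ 0) (hbbar : bbar > 0)
    (p : ℝ) (hp : p = abar / (abar + bbar)) :
    p * (g ((O ∪ X) ∩ Y) - g ((O ∪ X ∪ {u}) ∩ Y)) +
      (1 - p) * (g ((O ∪ X) ∩ Y) - g ((O ∪ X) ∩ (Y \ {u}))) ≤
      (1 / 2) * (p * a + (1 - p) * b) + 5 * rad := by
  obtain ⟨key1, key2⟩ := key_alg a b abar bbar rad p hrad ha hb habar hbbar hp
  have hs : (0:ℝ) < abar + bbar := by linarith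
  have hp0 : 0 ≤ p := by rw [hp]; positivity
  have hp1 : p ≤ 1 := by rw [hp, div_le_one hs]; linarith
  set S := (O ∪ X) ∩ Y with hS
  by_cases huO : u ∈ O
  · -- u ∈ S; the first difference vanishes
    have huS : u ∈ S := by simp [hS, huO, huY]
    have e1 : (O ∪ X ∪ {u}) ∩ Y = S := by
      ext x; simp only [hS, Finset.mem_inter, Finset.mem_union, Finset.mem_singleton]
      constructor
      · rintro ⟨h | rfl, hy⟩ <;> tauto
      · tauto
    have e2 : (O ∪ X) ∩ (Y \ {u}) = S \ {u} := by
      ext x; simp only [hS, Finset.mem_inter, Finset.mem_sdiff, Finset.mem_singleton]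
      tauto
    have hXsub : X ⊆ S \ {u} := by
      intro x hx
      simp only [hS, Finset.mem_sdiff, Finset.mem_inter, Finset.mem_union,
        Finset.mem_singleton]
      exact ⟨⟨Or.inr hx, hXY hx⟩, fun h => huX (h ▸ hx)⟩
    have huSd : u ∉ S \ {u} := by simp
    have hdr := hg X (S \ {u}) hXsub u huSd
    have eS : S \ {u} ∪ {u} = S := by
      ext x; simp only [Finset.mem_union, Finset.mem_sdiff, Finset.mem_singleton]
      constructor
      · rintro (⟨h, _⟩ | rfl) <;> [exact h; exact huS]
      · intro h; by_cases hx : x = u <;> tauto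
    rw [eS, ← ha_def] at hdr
    -- g S - g (S \ {u}) ≤ a
    rw [e1, e2]
    nlinarith [mul_le_mul_of_nonneg_left hdr (by linarith : (0:ℝ) ≤ 1 - p)]
  · -- u ∉ S; the second difference vanishes
    have huS : u ∉ S := by simp [hS, huO, huX]
    have e1 : (O ∪ X ∪ {u}) ∩ Y = S ∪ {u} := by
      ext x; simp only [hS, Finset.mem_inter, Finset.mem_union, Finset.mem_singleton]
      constructor
      · rintro ⟨h | rfl, hy⟩ <;> tauto
      · rintro (⟨h, hy⟩ | rfl) <;> [tauto; exact ⟨Or.inr rfl, huY⟩]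
    have e2 : (O ∪ X) ∩ (Y \ {u}) = S := by
      ext x; simp only [hS, Finset.mem_inter, Finset.mem_sdiff, Finset.mem_singleton]
      constructor
      · tauto
      · rintro ⟨hx, hy⟩
        refine ⟨hx, hy, fun h => huS ?_⟩
        simp only [hS, Finset.mem_inter]; exact h ▸ ⟨hx, hy⟩
    have hSsub : S ⊆ Y \ {u} := by
      intro x hx
      have hxY : x ∈ Y := (Finset.mem_inter.mp hx).2
      exact Finset.mem_sdiff.mpr
        ⟨hxY, fun h => huS ((Finset.mem_singleton.mp h) ▸ hx)⟩
    have huYd : u ∉ Y \ {u} := by simp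
    have hdr := hg S (Y \ {u}) hSsub u huYd
    have eY : Y \ {u} ∪ {u} = Y := by
      ext x; simp only [Finset.mem_union, Finset.mem_sdiff, Finset.mem_singleton]
      constructor
      · rintro (⟨h, _⟩ | rfl) <;> [exact h; exact huY]
      · intro h; by_cases hx : x = u <;> tauto
    rw [eY] at hdr
    -- g S - g (S ∪ {u}) ≤ b
    have hdr' : g S - g (S ∪ {u}) ≤ b := by rw [hb_def]; linarith
    rw [e1, e2]
    nlinarith [mul_le_mul_of_nonneg_left hdr' hp0]
end

section
/- Let n ∈ ℕ and let T be a natural number with T ≥ 2. Let m* = (T·√((25/32)·log T))^(2/3) (with the natural logarithm) and m = ⌈m*⌉. Then 2·n·m + (5/2)·n·T·√(2·log T / m) ≤ 8·n·T^(2/3)·(log T)^(1/3). -/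
set_option maxHeartbeats 1000000 in
theorem regret_bound (n T : ℕ) (hT : 2 ≤ T)
    (mstar : ℝ)
    (hmstar : mstar = ((T : ℝ) * Real.sqrt ((25 / 32) * Real.log T)) ^ ((2 : ℝ) / 3))
    (m : ℕ) (hm : m = ⌈mstar⌉₊) :
    2 * (n : ℝ) * m + (5 / 2) * n * T * Real.sqrt (2 * Real.log T / m) ≤
      8 * (n : ℝ) * (T : ℝ) ^ ((2 : ℝ) / 3) * (Real.log T) ^ ((1 : ℝ) / 3) := by
  set L := Real.log T with hLdef
  have hT2 : (2:ℝ) ≤ (T:ℝ) := by exact_mod_cast hT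
  have hT1 : (1:ℝ) < T := by linarith
  have hT0 : (0:ℝ) < T := by linarith
  have hL0 : 0 < L := Real.log_pos hT1
  have hlog2 : Real.log 2 ≤ L := Real.log_le_log (by norm_num) hT2
  have hlog2v : (0.6931471803:ℝ) < Real.log 2 := Real.log_two_gt_d9
  set X : ℝ := (T:ℝ)^((2:ℝ)/3) * L^((1:ℝ)/3) with hXdef
  have hX0 : 0 < X := mul_pos (Real.rpow_pos_of_pos hT0 _) (Real.rpow_pos_of_pos hL0 _)
  have hX3 : X^3 = (T:ℝ)^2 * L := by
    rw [hXdef, mul_pow, ← Real.rpow_natCast ((T:ℝ)^((2:ℝ)/3)) 3,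
        ← Real.rpow_natCast (L^((1:ℝ)/3)) 3,
        ← Real.rpow_mul hT0.le, ← Real.rpow_mul hL0.le]
    norm_num
  have hX1 : 1 ≤ X := by
    nlinarith [hX3, sq_nonneg (X - 1), sq_nonneg (X + 1), mul_pos hX0 hX0]
  have hcL : (0:ℝ) ≤ (25/32) * L := by positivity
  have hms : mstar = ((25:ℝ)/32)^((1:ℝ)/3) * X := by
    rw [hmstar, Real.sqrt_eq_rpow,
        Real.mul_rpow hT0.le (Real.rpow_nonneg hcL _),
        ← Real.rpow_mul hcL]
    norm_num
    rw [Real.mul_rpow (by norm_num) hL0.le, hXdef]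
    ring
  have h910 : (9/10:ℝ) ≤ ((25:ℝ)/32)^((1:ℝ)/3) := by
    have h : (9/10:ℝ) = ((729/1000:ℝ))^((1:ℝ)/3) := by
      rw [show (729/1000:ℝ) = (9/10)^(3:ℕ) by norm_num, ← Real.rpow_natCast,
          ← Real.rpow_mul (by norm_num)]
      norm_num
    rw [h]
    exact Real.rpow_le_rpow (by norm_num) (by norm_num) (by norm_num)
  have hc1 : ((25:ℝ)/32)^((1:ℝ)/3) ≤ 1 :=
    Real.rpow_le_one (by norm_num) (by norm_num) (by norm_num)
  have hms0 : 0 ≤ mstar := by rw [hms]; positivity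
  have hmsleX : mstar ≤ X := by
    rw [hms]
    calc ((25:ℝ)/32)^((1:ℝ)/3) * X ≤ 1 * X := mul_le_mul_of_nonneg_right hc1 hX0.le
      _ = X := one_mul X
  have hm1 : mstar ≤ (m:ℝ) := hm ▸ Nat.le_ceil mstar
  have hm2 : (m:ℝ) ≤ mstar + 1 := le_of_lt (hm ▸ Nat.ceil_lt_add_one hms0)
  have hmge : (9/10)*X ≤ (m:ℝ) :=
    le_trans (le_trans (mul_le_mul_of_nonneg_right h910 hX0.le) hms.ge) hm1
  have hm0 : (0:ℝ) < m := lt_of_lt_of_le (by positivity) hmge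
  have hsq : Real.sqrt (2*L/(m:ℝ)) ≤ (3/2)*X/(T:ℝ) := by
    have h1 : 2*L/(m:ℝ) ≤ ((3/2)*X/(T:ℝ))^2 := by
      have h2 : 2*L/(m:ℝ) ≤ 2*L/((9/10)*X) :=
        div_le_div_of_nonneg_left (by positivity) (by positivity) hmge
      refine h2.trans ?_
      rw [div_pow, div_le_div_iff₀ (by positivity) (by positivity)]
      have he : ((3/2)*X)^2 * ((9/10)*X) = (81/40) * X^3 := by ring
      rw [he, hX3]
      nlinarith [mul_nonneg (sq_nonneg (T:ℝ)) hL0.le]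
    calc Real.sqrt (2*L/(m:ℝ)) ≤ Real.sqrt (((3/2)*X/(T:ℝ))^2) := Real.sqrt_le_sqrt h1
      _ = (3/2)*X/(T:ℝ) := Real.sqrt_sq (by positivity)
  have hn0 : (0:ℝ) ≤ (n:ℝ) := Nat.cast_nonneg n
  have hterm2 : (5/2) * (n:ℝ) * T * Real.sqrt (2*L/(m:ℝ)) ≤ (15/4) * n * X := by
    have h := mul_le_mul_of_nonneg_left hsq (show (0:ℝ) ≤ (5/2)*(n:ℝ)*T by positivity)
    have heq : (5/2)*(n:ℝ)*T * ((3/2)*X/(T:ℝ)) = (15/4)*n*X := by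
      field_simp
      ring
    linarith [heq ▸ h]
  have hterm1 : 2 * (n:ℝ) * m ≤ 4 * n * X := by
    have hmX : (m:ℝ) ≤ 2*X := by linarith
    calc 2 * (n:ℝ) * m ≤ 2 * n * (2*X) := by
          apply mul_le_mul_of_nonneg_left hmX (by positivity)
      _ = 4 * n * X := by ring
  have hrhs : 8 * (n:ℝ) * (T:ℝ)^((2:ℝ)/3) * L^((1:ℝ)/3) = 8 * n * X := by
    rw [hXdef]; ring
  rw [hrhs]
  have hnX : 0 ≤ (n:ℝ) * X := by positivity
  linarith
end
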